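/- arXiv:1511.07226 — 5 statements merged into one kernel-verified Lean document; each statement's English description precedes it below -/
import Mathlib

section
/- Let A be an SPD linear map on a finite-dimensional real inner product space V, let b, x₀ ∈ V, and let x⋆ := A⁻¹ b. Let p₀, …, p_{n−1} ∈ V be nonzero and pairwise A-orthogonal (⟪A p_j, p_k⟫ = 0 for j ≠ k). Define the conjugate directions iteration by r_j := b − A x_j, α_j := ⟪p_j, r_j⟫ / ⟪p_j, A p_j⟫, and x_{j+1} := x_j + α_j p_j. Then for every i ≤ n, the iterate x_i minimizes the A-norm error over the affine subspace explored so far: ‖x⋆ − x_i‖_A ≤ ‖x⋆ − y‖_A for every y ∈ x₀ + span(p₀, …, p_{i−1}). -/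
open scoped RealInnerProductSpace

/-- Conjugate directions: each iterate minimizes the A-norm error over the
affine subspace explored so far. -/
theorem conjugate_directions_minimization
    {V : Type*} [NormedAddCommGroup V] [InnerProductSpace ℝ V] [FiniteDimensional ℝ V]
    (A : V →ₗ[ℝ] V)
    (hsym : ∀ u v : V, ⟪A u, v⟫ = ⟪u, A v⟫)
    (hpos : ∀ v : V, v ≠ 0 → 0 < ⟪A v, v⟫)
    (b x₀ xstar : V) (hxstar : A xstar = b)
    (n : ℕ) (p : ℕ → V)
    (hpne : ∀ j, j < n → p j ≠ 0)
    (horth : ∀ j, j < n → ∀ k, k < n → j ≠ k → ⟪A (p j), p k⟫ = 0)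
    (x : ℕ → V) (hx0 : x 0 = x₀)
    (hxrec : ∀ j, x (j + 1) =
      x j + (⟪p j, b - A (x j)⟫ / ⟪p j, A (p j)⟫) • p j) :
    ∀ i, i ≤ n → ∀ y : V,
      y - x₀ ∈ Submodule.span ℝ {v : V | ∃ j, j < i ∧ v = p j} →
      Real.sqrt ⟪A (xstar - x i), xstar - x i⟫ ≤
        Real.sqrt ⟪A (xstar - y), xstar - y⟫ := by
  have hnn : ∀ v : V, 0 ≤ ⟪A v, v⟫ := by
    intro v
    by_cases hv : v = 0
    · simp [hv]
    · exact (hpos v hv).le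
  -- x i - x₀ lies in the span
  have hspan : ∀ i, x i - x₀ ∈ Submodule.span ℝ {v : V | ∃ j, j < i ∧ v = p j} := by
    intro i
    induction i with
    | zero => simp [hx0]
    | succ i ih =>
      have h1 : x i - x₀ ∈ Submodule.span ℝ {v : V | ∃ j, j < i + 1 ∧ v = p j} := by
        refine Submodule.span_mono ?_ ih
        rintro v ⟨j, hj, rfl⟩
        exact ⟨j, hj.trans (Nat.lt_succ_self i), rfl⟩
      have h2 : p i ∈ Submodule.span ℝ {v : V | ∃ j, j < i + 1 ∧ v = p j} :=
        Submodule.subset_span ⟨i, Nat.lt_succ_self i, rfl⟩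
      have hE : x (i + 1) - x₀ =
          (x i - x₀) + (⟪p i, b - A (x i)⟫ / ⟪p i, A (p i)⟫) • p i := by
        rw [hxrec i]; abel
      rw [hE]
      exact Submodule.add_mem _ h1 (Submodule.smul_mem _ _ h2)
  -- error is A-orthogonal to previous directions
  have herr : ∀ i, i ≤ n → ∀ j, j < i → ⟪A (xstar - x i), p j⟫ = 0 := by
    intro i
    induction i with
    | zero => intro _ j hj; omega
    | succ i ih =>
      intro hi j hj
      have hiN : i < n := hi
      have hppos : 0 < ⟪A (p i), p i⟫ := hpos _ (hpne i hiN)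
      have hden : ⟪p i, A (p i)⟫ = ⟪A (p i), p i⟫ := real_inner_comm _ _
      have hnum : ⟪p i, b - A (x i)⟫ = ⟪A (xstar - x i), p i⟫ := by
        rw [← hxstar, ← map_sub, real_inner_comm, hsym]
      have hsplit : ⟪A (xstar - x (i + 1)), p j⟫ =
          ⟪A (xstar - x i), p j⟫ -
            (⟪p i, b - A (x i)⟫ / ⟪p i, A (p i)⟫) * ⟪A (p i), p j⟫ := by
        rw [hxrec i]
        have : xstar - (x i + (⟪p i, b - A (x i)⟫ / ⟪p i, A (p i)⟫) • p i) =
            (xstar - x i) - (⟪p i, b - A (x i)⟫ / ⟪p i, A (p i)⟫) • p i := by abel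
        rw [this, map_sub, map_smul, inner_sub_left, inner_smul_left]
        norm_num
      rcases Nat.lt_or_ge j i with hji | hji
      · rw [hsplit, ih hiN.le j hji, horth i hiN j (hji.trans hiN) (Nat.ne_of_gt hji)]
        ring
      · have hji' : j = i := by omega
        subst hji'
        rw [hsplit, hnum, hden, div_mul_cancel₀ _ (ne_of_gt hppos)]
        ring
  intro i hi y hy
  set e := xstar - x i with he
  have horthspan : ∀ d ∈ Submodule.span ℝ {v : V | ∃ j, j < i ∧ v = p j},
      ⟪A e, d⟫ = 0 := by
    intro d hd
    induction hd using Submodule.span_induction with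
    | mem v hv =>
      obtain ⟨j, hj, rfl⟩ := hv
      exact herr i hi j hj
    | zero => simp
    | add u v _ _ hu hv => rw [inner_add_right, hu, hv]; ring
    | smul c u _ hu => rw [inner_smul_right, hu]; ring
  have hd : x i - y ∈ Submodule.span ℝ {v : V | ∃ j, j < i ∧ v = p j} := by
    have : x i - y = (x i - x₀) - (y - x₀) := by abel
    rw [this]
    exact Submodule.sub_mem _ (hspan i) hy
  set d := x i - y with hdd
  have hdecomp : xstar - y = e + d := by simp [he, hdd]
  have hcross : ⟪A e, d⟫ = 0 := horthspan d hd
  have hcross' : ⟪A d, e⟫ = 0 := by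
    rw [hsym, real_inner_comm, hcross]
  have hexp : ⟪A (xstar - y), xstar - y⟫ = ⟪A e, e⟫ + ⟪A d, d⟫ := by
    rw [hdecomp, map_add, inner_add_left, inner_add_right, inner_add_right,
      hcross, hcross']
    ring
  apply Real.sqrt_le_sqrt
  rw [hexp]
  linarith [hnn d]
end

section
/- Let A be an SPD linear map on a finite-dimensional real inner product space V of dimension n, let b, x₀ ∈ V, and let p₀, …, p_{n−1} be nonzero, pairwise A-orthogonal vectors that span V. Define r_j := b − A x_j, α_j := ⟪p_j, r_j⟫ / ⟪p_j, A p_j⟫, and x_{j+1} := x_j + α_j p_j. Then the conjugate directions method terminates with the exact solution after n steps: x_n = A⁻¹ b. -/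
/-! A step along `p j` makes the new residual `b - A x (j + 1)` orthogonal to `p j`, and a step
along a direction A-orthogonal to `p j` leaves the residual's inner product with `p j` unchanged.
After `n` steps the residual is therefore orthogonal to every `p j`, hence to their span `V`, so
it vanishes; positivity of `A` makes `A` injective, so `x n = xstar`. -/

open scoped RealInnerProductSpace

theorem eq_zero_of_forall_inner_eq_zero_of_span_eq_top {𝕜 E : Type*} [RCLike 𝕜]
    [NormedAddCommGroup E] [InnerProductSpace 𝕜 E] {s : Set E} (hs : Submodule.span 𝕜 s = ⊤)
    {v : E} (h : ∀ u ∈ s, inner 𝕜 u v = 0) : v = 0 := by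
  have hortho : Submodule.span 𝕜 s ⟂ Submodule.span 𝕜 {v} :=
    Submodule.isOrtho_span.2 fun u hu w hw => (Set.mem_singleton_iff.1 hw) ▸ h u hu
  rwa [hs, Submodule.isOrtho_top_left, Submodule.span_singleton_eq_bot] at hortho

section ConjugateDirections

variable {V : Type*} [NormedAddCommGroup V] [InnerProductSpace ℝ V] {A : V →ₗ[ℝ] V}

theorem eq_zero_of_inner_apply_self_eq_zero (hpos : ∀ v : V, v ≠ 0 → 0 < ⟪A v, v⟫) {v : V}
    (h : ⟪v, A v⟫ = 0) : v = 0 := by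
  by_contra hv
  have := hpos v hv
  rw [real_inner_comm, h] at this
  exact lt_irrefl 0 this

theorem injective_of_inner_apply_self_pos (hpos : ∀ v : V, v ≠ 0 → 0 < ⟪A v, v⟫) :
    Function.Injective A :=
  (injective_iff_map_eq_zero A).2 fun v hv =>
    eq_zero_of_inner_apply_self_eq_zero hpos (by rw [hv, inner_zero_right])

theorem inner_residual_step_self (hpos : ∀ v : V, v ≠ 0 → 0 < ⟪A v, v⟫) (b x d : V) :
    ⟪d, b - A (x + (⟪d, b - A x⟫ / ⟪d, A d⟫) • d)⟫ = 0 := by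
  by_cases hd : d = 0
  · simp [hd]
  have hdAd : ⟪d, A d⟫ ≠ 0 := mt (eq_zero_of_inner_apply_self_eq_zero hpos) hd
  rw [map_add, map_smul, sub_add_eq_sub_sub, inner_sub_right, real_inner_smul_right]
  field_simp
  ring

theorem inner_residual_step_of_inner_apply_eq_zero {d q : V} (h : ⟪A d, q⟫ = 0) (b x : V)
    (c : ℝ) : ⟪q, b - A (x + c • d)⟫ = ⟪q, b - A x⟫ := by
  rw [map_add, map_smul, sub_add_eq_sub_sub, inner_sub_right, real_inner_smul_right,
    real_inner_comm (A d), h, mul_zero, sub_zero]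

theorem inner_residual_eq_zero_of_lt (hpos : ∀ v : V, v ≠ 0 → 0 < ⟪A v, v⟫) {b : V} {n : ℕ}
    {p : ℕ → V} (horth : ∀ j, j < n → ∀ k, k < n → j ≠ k → ⟪A (p j), p k⟫ = 0) {x : ℕ → V}
    (hxrec : ∀ j, x (j + 1) = x j + (⟪p j, b - A (x j)⟫ / ⟪p j, A (p j)⟫) • p j) :
    ∀ m ≤ n, ∀ k < m, ⟪p k, b - A (x m)⟫ = 0 := by
  intro m
  induction m with
  | zero => intro _ k hk; exact absurd hk k.not_lt_zero
  | succ m ih =>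
    intro hm k hk
    rw [hxrec m]
    rcases (Nat.lt_succ_iff.1 hk).lt_or_eq with hkm | rfl
    · rw [inner_residual_step_of_inner_apply_eq_zero (horth m hm k (hkm.trans hm) hkm.ne')]
      exact ih (Nat.le_of_succ_le hm) k hkm
    · exact inner_residual_step_self hpos _ _ _

end ConjugateDirections

theorem conjugate_directions_termination_general
    {V : Type*} [NormedAddCommGroup V] [InnerProductSpace ℝ V]
    (A : V →ₗ[ℝ] V)
    (hpos : ∀ v : V, v ≠ 0 → 0 < ⟪A v, v⟫)
    (b xstar : V) (hxstar : A xstar = b)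
    (n : ℕ)
    (p : ℕ → V)
    (horth : ∀ j, j < n → ∀ k, k < n → j ≠ k → ⟪A (p j), p k⟫ = 0)
    (hspan : Submodule.span ℝ {v : V | ∃ j, j < n ∧ v = p j} = ⊤)
    (x : ℕ → V)
    (hxrec : ∀ j, x (j + 1) =
      x j + (⟪p j, b - A (x j)⟫ / ⟪p j, A (p j)⟫) • p j) :
    x n = xstar := by
  have hresidual : b - A (x n) = 0 :=
    eq_zero_of_forall_inner_eq_zero_of_span_eq_top hspan <| by
      rintro _ ⟨k, hk, rfl⟩
      exact inner_residual_eq_zero_of_lt hpos horth hxrec n le_rfl k hk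
  exact injective_of_inner_apply_self_pos hpos (by rw [hxstar, sub_eq_zero.1 hresidual])

/-- The conjugate directions method terminates with the exact solution after
`n` steps when the `n` nonzero, pairwise A-orthogonal directions span the
`n`-dimensional space. -/
theorem conjugate_directions_termination
    {V : Type*} [NormedAddCommGroup V] [InnerProductSpace ℝ V] [FiniteDimensional ℝ V]
    (A : V →ₗ[ℝ] V)
    (hsym : ∀ u v : V, ⟪A u, v⟫ = ⟪u, A v⟫)
    (hpos : ∀ v : V, v ≠ 0 → 0 < ⟪A v, v⟫)
    (b x₀ xstar : V) (hxstar : A xstar = b)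
    (n : ℕ) (hdim : Module.finrank ℝ V = n)
    (p : ℕ → V)
    (hpne : ∀ j, j < n → p j ≠ 0)
    (horth : ∀ j, j < n → ∀ k, k < n → j ≠ k → ⟪A (p j), p k⟫ = 0)
    (hspan : Submodule.span ℝ {v : V | ∃ j, j < n ∧ v = p j} = ⊤)
    (x : ℕ → V) (hx0 : x 0 = x₀)
    (hxrec : ∀ j, x (j + 1) =
      x j + (⟪p j, b - A (x j)⟫ / ⟪p j, A (p j)⟫) • p j) :
    x n = xstar :=
  conjugate_directions_termination_general A hpos b xstar hxstar n p horth hspan x hxrec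
end

section
/- Let V be a finite-dimensional real inner product space, let A : V → V be an invertible bounded linear map, and let B : V → V be a faithful preconditioner with constant c with respect to A, i.e. ‖B(A v) − v‖ ≤ c ‖v‖ for all v ∈ V. For r ∈ V with r ≠ 0, set w := A(B(r)) and θ := ⟪r, w⟫ / ‖r‖². Then |θ − 1| ≤ c ‖A‖ ‖A⁻¹‖. In particular, as the preconditioner approaches A⁻¹ (c → 0), the projection coefficient θ approaches 1. -/
open scoped RealInnerProductSpace

/-- For a faithful preconditioner with constant `c`, the projection
coefficient `θ = ⟪r, w⟫ / ‖r‖²` with `w = A(B(r))` satisfies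
`|θ − 1| ≤ c ‖A‖ ‖A⁻¹‖`. -/
theorem faithful_preconditioner_theta_near_one
    {V : Type*} [NormedAddCommGroup V] [InnerProductSpace ℝ V] [FiniteDimensional ℝ V]
    (A : V ≃L[ℝ] V) (B : V → V) (c : ℝ)
    (hfaithful : ∀ v : V, ‖B (A v) - v‖ ≤ c * ‖v‖)
    (r : V) (hr : r ≠ 0)
    (w : V) (hw : w = A (B r))
    (θ : ℝ) (hθ : θ = ⟪r, w⟫ / ‖r‖ ^ 2) :
    |θ - 1| ≤ c * ‖(A : V →L[ℝ] V)‖ * ‖(A.symm : V →L[ℝ] V)‖ := by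
  have hrn : (0:ℝ) < ‖r‖ := norm_pos_iff.mpr hr
  set v := A.symm r with hv
  have hAv : A v = r := A.apply_symm_apply r
  have h1 : θ - 1 = ⟪r, w - r⟫ / ‖r‖ ^ 2 := by
    rw [hθ, inner_sub_right, real_inner_self_eq_norm_sq]
    field_simp
  have h2 : w - r = A (B (A v) - v) := by
    rw [hw, hAv, map_sub, hAv]
  have h3 : ‖w - r‖ ≤ c * ‖(A : V →L[ℝ] V)‖ * ‖(A.symm : V →L[ℝ] V)‖ * ‖r‖ := by
    rw [h2]
    calc ‖A (B (A v) - v)‖ ≤ ‖(A : V →L[ℝ] V)‖ * ‖B (A v) - v‖ :=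
          (A : V →L[ℝ] V).le_opNorm _
      _ ≤ ‖(A : V →L[ℝ] V)‖ * (c * ‖v‖) := by
          apply mul_le_mul_of_nonneg_left (hfaithful v) (norm_nonneg _)
      _ ≤ ‖(A : V →L[ℝ] V)‖ * (c * (‖(A.symm : V →L[ℝ] V)‖ * ‖r‖)) := by
          have hvne : v ≠ 0 := by
            simp [hv, hr]
          have hvpos : (0:ℝ) < ‖v‖ := norm_pos_iff.mpr hvne
          have hc : 0 ≤ c := by
            have h := hfaithful v
            nlinarith [norm_nonneg (B (A v) - v)]
          have hop : ‖v‖ ≤ ‖(A.symm : V →L[ℝ] V)‖ * ‖r‖ := by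
            rw [hv]; exact (A.symm : V →L[ℝ] V).le_opNorm r
          exact mul_le_mul_of_nonneg_left (mul_le_mul_of_nonneg_left hop hc) (norm_nonneg _)
      _ = c * ‖(A : V →L[ℝ] V)‖ * ‖(A.symm : V →L[ℝ] V)‖ * ‖r‖ := by ring
  have h4 : |⟪r, w - r⟫| ≤ ‖r‖ * ‖w - r‖ := abs_real_inner_le_norm r (w - r)
  rw [h1, abs_div, abs_pow, abs_norm]
  rw [div_le_iff₀ (by positivity)]
  calc |⟪r, w - r⟫| ≤ ‖r‖ * ‖w - r‖ := h4
    _ ≤ ‖r‖ * (c * ‖(A : V →L[ℝ] V)‖ * ‖(A.symm : V →L[ℝ] V)‖ * ‖r‖) :=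
        mul_le_mul_of_nonneg_left h3 (norm_nonneg r)
    _ = c * ‖(A : V →L[ℝ] V)‖ * ‖(A.symm : V →L[ℝ] V)‖ * ‖r‖ ^ 2 := by ring
end

section
/- Let V be a real inner product space, A : V → V a linear map, p₀, …, p_m ∈ V orthonormal vectors, u₀, …, u_{m−1} ∈ V, and H̄ ∈ ℝ^{(m+1)×m} a matrix such that A u_j = Σ_{i=0}^{m} H̄_{i,j} p_i for each j = 0, …, m−1. Let r₀ := β p₀ with β := ‖r₀‖. Then for every y ∈ ℝ^m, ‖r₀ − A(Σ_{j=0}^{m−1} y_j u_j)‖ = ‖β e₀ − H̄ y‖, where e₀ ∈ ℝ^{m+1} is the first standard basis vector and the right-hand norm is the Euclidean norm on ℝ^{m+1}. Consequently, a coefficient vector y minimizing ‖H̄ y − β e₀‖ yields the approximation x = x₀ + Σ_j y_j u_j of minimal residual norm ‖b − A x‖ over x₀ + span(u₀, …, u_{m−1}), where r₀ = b − A x₀. -/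
open scoped RealInnerProductSpace

/-- GMRES least-squares reduction: with an Arnoldi-type relation `AU = PH̄`
for orthonormal `p₀, …, p_m`, the residual norm of any candidate
`x₀ + Σ y_j u_j` equals the Euclidean norm `‖β e₀ − H̄ y‖`; consequently a
minimizer of the small least-squares problem yields the minimal-residual
approximation over `x₀ + span(u₀, …, u_{m−1})`. -/
theorem fgmres_least_squares
    {V : Type*} [NormedAddCommGroup V] [InnerProductSpace ℝ V]
    (A : V →ₗ[ℝ] V) (m : ℕ)
    (p : Fin (m + 1) → V) (hp : Orthonormal ℝ p)
    (u : Fin m → V) (H : Matrix (Fin (m + 1)) (Fin m) ℝ)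
    (hH : ∀ j : Fin m, A (u j) = ∑ i : Fin (m + 1), H i j • p i)
    (b x₀ r₀ : V) (hr₀ : r₀ = b - A x₀)
    (hr₀p : r₀ = ‖r₀‖ • p 0) :
    (∀ y : Fin m → ℝ,
      ‖r₀ - A (∑ j : Fin m, y j • u j)‖ =
        Real.sqrt (∑ i : Fin (m + 1),
          (‖r₀‖ * (if i = 0 then 1 else 0) - ∑ j : Fin m, H i j * y j) ^ 2)) ∧
    (∀ y : Fin m → ℝ,
      (∀ y' : Fin m → ℝ,
        Real.sqrt (∑ i : Fin (m + 1),
            (‖r₀‖ * (if i = 0 then 1 else 0) - ∑ j : Fin m, H i j * y j) ^ 2) ≤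
          Real.sqrt (∑ i : Fin (m + 1),
            (‖r₀‖ * (if i = 0 then 1 else 0) - ∑ j : Fin m, H i j * y' j) ^ 2)) →
      ∀ y' : Fin m → ℝ,
        ‖b - A (x₀ + ∑ j : Fin m, y j • u j)‖ ≤
          ‖b - A (x₀ + ∑ j : Fin m, y' j • u j)‖) := by
  have key : ∀ y : Fin m → ℝ,
      ‖r₀ - A (∑ j : Fin m, y j • u j)‖ =
        Real.sqrt (∑ i : Fin (m + 1),
          (‖r₀‖ * (if i = 0 then 1 else 0) - ∑ j : Fin m, H i j * y j) ^ 2) := by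
    intro y
    set c : Fin (m + 1) → ℝ :=
      fun i => ‖r₀‖ * (if i = 0 then 1 else 0) - ∑ j : Fin m, H i j * y j with hc
    have hz : r₀ - A (∑ j : Fin m, y j • u j) = ∑ i : Fin (m + 1), c i • p i := by
      have h1 : A (∑ j : Fin m, y j • u j) =
          ∑ i : Fin (m + 1), (∑ j : Fin m, H i j * y j) • p i := by
        rw [map_sum]
        simp only [map_smul, hH, Finset.smul_sum]
        rw [Finset.sum_comm]
        refine Finset.sum_congr rfl fun i _ => ?_
        rw [Finset.sum_smul]
        refine Finset.sum_congr rfl fun j _ => ?_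
        rw [smul_smul, mul_comm]
      have h2 : r₀ = ∑ i : Fin (m + 1), (‖r₀‖ * (if i = 0 then 1 else 0)) • p i := by
        conv_lhs => rw [hr₀p]
        rw [Finset.sum_eq_single (0 : Fin (m + 1))]
        · simp
        · intro i _ hi; simp [hi]
        · simp
      rw [h1]
      conv_lhs => rw [h2]
      rw [← Finset.sum_sub_distrib]
      exact Finset.sum_congr rfl fun i _ => (sub_smul _ _ _).symm
    rw [hz, @norm_eq_sqrt_real_inner]
    congr 1
    rw [hp.inner_sum c c Finset.univ]
    refine Finset.sum_congr rfl fun i _ => ?_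
    rw [starRingEnd_apply, star_trivial, ← pow_two]
  refine ⟨key, ?_⟩
  intro y hmin y'
  have hb : ∀ z : Fin m → ℝ, b - A (x₀ + ∑ j : Fin m, z j • u j) =
      r₀ - A (∑ j : Fin m, z j • u j) := by
    intro z
    rw [hr₀, map_add]
    abel
  rw [hb, hb, key, key]
  exact hmin y'
end

section
/- Let V be a real vector space. Fix i ≥ 1, vectors p₀, …, p_i, z̄₀, …, z̄_{i−1}, w̄ ∈ V, scalars h̄_{0,i−1}, …, h̄_{i,i−1} ∈ ℝ with h̄_{i,i−1} ≠ 0, and a shift σ ∈ ℝ. Define h_{k,i−1} := h̄_{k,i−1} for k ≠ i−1 and h_{i−1,i−1} := h̄_{i−1,i−1} + σ, and suppose p_i = (z̄_{i−1} − Σ_{k=0}^{i−1} h̄_{k,i−1} p_k) / h̄_{i,i−1}. Then the shifted pipelined-FGMRES update simplifies: (w̄ − Σ_{k=0}^{i−1} h̄_{k,i−1}(z̄_k + σ p_k)) / h̄_{i,i−1} − σ p_i = (w̄ − Σ_{k=0}^{i−1} h_{k,i−1} z̄_k) / h̄_{i,i−1}. That is, when all shift parameters are equal to the constant σ, the recurrence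 for the shifted basis vector z̄_i reduces to (w̄_{i−1} − Σ_{k=0}^{i−1} h_{k,i−1} z̄_k)/h_{i,i−1}. -/
/-- With a constant shift `σ`, the recurrence for the shifted basis vector in
pipelined flexible GMRES simplifies:
`(w̄ − Σ_k h̄_k (z̄_k + σ p_k))/h̄_i − σ p_i = (w̄ − Σ_k h_k z̄_k)/h̄_i`,
where `h_k = h̄_k` except `h_{i−1} = h̄_{i−1} + σ`.  Here `i = j + 1 ≥ 1`. -/
theorem pipefgmres_constant_shift_simplification
    {V : Type*} [AddCommGroup V] [Module ℝ V]
    (j : ℕ) (p zbar : ℕ → V) (wbar : V)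
    (hbar h : ℕ → ℝ) (σ : ℝ)
    (hbarne : hbar (j + 1) ≠ 0)
    (hh : ∀ k, k ≠ j → h k = hbar k)
    (hhj : h j = hbar j + σ)
    (hp : p (j + 1) = (hbar (j + 1))⁻¹ •
      (zbar j - ∑ k ∈ Finset.range (j + 1), hbar k • p k)) :
    (hbar (j + 1))⁻¹ •
        (wbar - ∑ k ∈ Finset.range (j + 1), hbar k • (zbar k + σ • p k))
      - σ • p (j + 1) =
    (hbar (j + 1))⁻¹ • (wbar - ∑ k ∈ Finset.range (j + 1), h k • zbar k) := by
  have hsum : ∑ k ∈ Finset.range (j + 1), h k • zbar k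
      = (∑ k ∈ Finset.range (j + 1), hbar k • zbar k) + σ • zbar j := by
    rw [Finset.sum_range_succ, Finset.sum_range_succ, hhj,
      Finset.sum_congr rfl (fun k hk => by
        rw [hh k (Nat.ne_of_lt (Finset.mem_range.mp hk))])]
    rw [add_smul]
    abel
  have hsum2 : ∑ k ∈ Finset.range (j + 1), hbar k • (zbar k + σ • p k)
      = (∑ k ∈ Finset.range (j + 1), hbar k • zbar k)
        + σ • (∑ k ∈ Finset.range (j + 1), hbar k • p k) := by
    rw [Finset.smul_sum, ← Finset.sum_add_distrib]
    exact Finset.sum_congr rfl fun k _ => by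
      rw [smul_add, smul_comm]
  rw [hp, hsum, hsum2, smul_sub, smul_sub, smul_sub, smul_sub, smul_add,
    smul_comm σ ((hbar (j+1))⁻¹), smul_comm σ ((hbar (j+1))⁻¹), smul_add]
  abel
end
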